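/- Let P : C^op → InfSL be a variational doctrine, f : X → A and g : Y → A arrows of C, and ρ, σ P-equivalence relations over X, Y with ρ ≤ P(f×f)(δ_A) and σ ≤ P(g×g)(δ_A). If the square in C formed by k : S → X, h : S → Y with f∘k = g∘h is a weak pullback, then the square in Q_P with vertex (S, P(h×h)(σ) ∧ P(k×k)(ρ)), arrows [k] : → (X,ρ), [h] : → (Y,σ) over (A, δ_A) via [f] and [g], is a (strong) pullback in Q_P. -/

import Mathlib

open CategoryTheory CategoryTheory.Limits Opposite

noncomputable section

universe w v u

namespace DoctrinePaper

variable {C : Type u} [Category.{v} C] [HasFiniteProducts C]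

/-- The fiber of a primary doctrine `P : Cᵒᵖ ⥤ SemilatInfCat` over an object `A`. -/
abbrev Fib (P : Cᵒᵖ ⥤ SemilatInfCat.{w}) (A : C) : Type w :=
  ↥(P.obj (op A))

/-- Reindexing along an arrow `f : A ⟶ B`. -/
def rmap (P : Cᵒᵖ ⥤ SemilatInfCat.{w}) {A B : C} (f : A ⟶ B) :
    Fib P B → Fib P A :=
  fun x => (P.map f.op) x

variable (P : Cᵒᵖ ⥤ SemilatInfCat.{w})

/-- An elementary doctrine: fibered equalities `δ A ∈ P (A ⨯ A)` such that
`E_e(α) = P⟨pr1,pr2⟩(α) ⊓ P⟨pr2,pr3⟩(δ A)` is left adjoint to reindexing along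
`e = ⟨pr1,pr2,pr2⟩ : X ⨯ A ⟶ (X ⨯ A) ⨯ A`. -/
structure IsElementary where
  δ : ∀ A : C, Fib P (A ⨯ A)
  adj :
    ∀ (X A : C) (α : Fib P (X ⨯ A)) (β : Fib P ((X ⨯ A) ⨯ A)),
      (rmap P (prod.fst : (X ⨯ A) ⨯ A ⟶ X ⨯ A) α ⊓
          rmap P (prod.lift (prod.fst ≫ prod.snd) prod.snd : (X ⨯ A) ⨯ A ⟶ A ⨯ A) (δ A) ≤ β)
        ↔ α ≤ rmap P (prod.lift (𝟙 (X ⨯ A)) prod.snd : X ⨯ A ⟶ (X ⨯ A) ⨯ A) β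

/-- A `P`-equivalence relation over `A`. -/
structure IsEqRel (hE : IsElementary P) {A : C} (ρ : Fib P (A ⨯ A)) : Prop where
  refl : hE.δ A ≤ ρ
  symm : ρ = rmap P (prod.lift prod.snd prod.fst : A ⨯ A ⟶ A ⨯ A) ρ
  trans :
    rmap P (prod.fst : (A ⨯ A) ⨯ A ⟶ A ⨯ A) ρ ⊓
        rmap P (prod.lift (prod.fst ≫ prod.snd) prod.snd : (A ⨯ A) ⨯ A ⟶ A ⨯ A) ρ ≤
      rmap P (prod.lift (prod.fst ≫ prod.fst) prod.snd : (A ⨯ A) ⨯ A ⟶ A ⨯ A) ρ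

/-- An elementary existential doctrine, together with the induced left adjoints
`∃_f` along all arrows, satisfying the adjunction law, Frobenius reciprocity, and
the Beck–Chevalley condition along pullbacks of projections. -/
structure IsExistential extends IsElementary P where
  E : ∀ {A B : C}, (A ⟶ B) → Fib P A → Fib P B
  adjE : ∀ {A B : C} (f : A ⟶ B) (α : Fib P A) (β : Fib P B),
    E f α ≤ β ↔ α ≤ rmap P f β
  frobenius : ∀ {A B : C} (f : A ⟶ B) (α : Fib P A) (β : Fib P B),
    E f (α ⊓ rmap P f β) = E f α ⊓ β
  beckChevalley : ∀ {B A A' : C} (f : A' ⟶ A) (β : Fib P (B ⨯ A)),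
    E (prod.snd : B ⨯ A' ⟶ A') (rmap P (prod.map (𝟙 B) f) β) =
      rmap P f (E (prod.snd : B ⨯ A ⟶ A) β)

/-- Descent data for a relation `ρ` over `A`. -/
def Des {A : C} (ρ : Fib P (A ⨯ A)) : Set (Fib P A) :=
  {α | rmap P (prod.fst : A ⨯ A ⟶ A) α ⊓ ρ ≤ rmap P (prod.snd : A ⨯ A ⟶ A) α}

/-- Comprehensive diagonals: `f = g` iff `⊤ = P⟨f,g⟩(δ)`. -/
def ComprehensiveDiagonals (hE : IsElementary P) : Prop :=
  ∀ {X A : C} (f g : X ⟶ A), f = g ↔ rmap P (prod.lift f g) (hE.δ A) = ⊤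

/-- (Weak) comprehension structure. -/
structure Comprehension where
  cObj : ∀ {A : C}, Fib P A → C
  cArr : ∀ {A : C} (α : Fib P A), cObj α ⟶ A
  cTop : ∀ {A : C} (α : Fib P A), rmap P (cArr α) α = ⊤
  cUniv : ∀ {A : C} (α : Fib P A) {Y : C} (f : Y ⟶ A),
    rmap P f α = ⊤ → ∃ k : Y ⟶ cObj α, k ≫ cArr α = f

/-- Full comprehension. -/
def Comprehension.Full (hC : Comprehension P) : Prop :=
  ∀ {A : C} (α β : Fib P A), α ≤ β ↔ rmap P (hC.cArr α) β = ⊤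

/-- Strong comprehension: comprehension arrows are monic. -/
def Comprehension.Strong (hC : Comprehension P) : Prop :=
  ∀ {A : C} (α : Fib P A), Mono (hC.cArr α)

/-- `P`-injective arrow. -/
def PInj (hE : IsElementary P) {X A : C} (f : X ⟶ A) : Prop :=
  rmap P (prod.map f f) (hE.δ A) = hE.δ X

/-- `P`-surjective arrow. -/
def PSurj (hEx : IsExistential P) {X A : C} (f : X ⟶ A) : Prop :=
  hEx.E f (⊤ : Fib P X) = ⊤

/-- The product relation `ρ ⊠ σ` on `(A ⨯ B) ⨯ (A ⨯ B)`. -/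
def boxprod {A B : C} (ρ : Fib P (A ⨯ A)) (σ : Fib P (B ⨯ B)) :
    Fib P ((A ⨯ B) ⨯ (A ⨯ B)) :=
  rmap P (prod.map prod.fst prod.fst) ρ ⊓ rmap P (prod.map prod.snd prod.snd) σ

/-- The hom condition of the elementary quotient completion: `f : A ⟶ B`
represents an arrow `(A,ρ) ⟶ (B,σ)` iff `ρ ≤ P(f×f)(σ)`. -/
def QHomC {A B : C} (ρ : Fib P (A ⨯ A)) (σ : Fib P (B ⨯ B)) (f : A ⟶ B) : Prop :=
  ρ ≤ rmap P (prod.map f f) σ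

/-- The equivalence on representatives: `f ∼ g` iff `⊤ = P⟨f,g⟩(σ)`. -/
def QEq {A B : C} (σ : Fib P (B ⨯ B)) (f g : A ⟶ B) : Prop :=
  rmap P (prod.lift f g) σ = ⊤

/-!
With comprehensive diagonals, `[a ≫ f] = [b ≫ g]` over `(A, δ_A)` is an honest equation in `C`,
so the weak pullback supplies a mediating arrow `u`. Uniqueness in `Q_P` is automatic: the
vertex relation identifies `u` and `u'` exactly when `u ≫ h ∼ u' ≫ h` in `σ` and `u ≫ k ∼ u' ≫ k`
in `ρ`, which holds for any `u'` making the two triangles commute up to `σ` and `ρ`.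
-/

omit [HasFiniteProducts C] in
lemma rmap_comp {A B D : C} (f : A ⟶ B) (g : B ⟶ D) (x : Fib P D) :
    rmap P (f ≫ g) x = rmap P f (rmap P g x) := by
  simp [rmap]

omit [HasFiniteProducts C] in
lemma rmap_inf {A B : C} (f : A ⟶ B) (x y : Fib P B) :
    rmap P f (x ⊓ y) = rmap P f x ⊓ rmap P f y :=
  (P.map f.op).map_inf' x y

omit [HasFiniteProducts C] in
lemma rmap_mono {A B : C} (f : A ⟶ B) : Monotone (rmap P f) :=
  OrderHomClass.mono (P.map f.op).toInfHom

lemma qHomC_inf_iff {Z W : C} (γ : Fib P (Z ⨯ Z)) (τ τ' : Fib P (W ⨯ W)) (u : Z ⟶ W) :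
    QHomC P γ (τ ⊓ τ') u ↔ QHomC P γ τ u ∧ QHomC P γ τ' u := by
  rw [QHomC, rmap_inf, le_inf_iff, QHomC, QHomC]

lemma qHomC_rmap_prodMap_iff {Z S W : C} (γ : Fib P (Z ⨯ Z)) (τ : Fib P (W ⨯ W))
    (u : Z ⟶ S) (h : S ⟶ W) :
    QHomC P γ (rmap P (prod.map h h) τ) u ↔ QHomC P γ τ (u ≫ h) := by
  rw [QHomC, QHomC, ← rmap_comp, prod.map_map]

lemma qEq_inf_iff {Z W : C} (τ τ' : Fib P (W ⨯ W)) (u u' : Z ⟶ W) :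
    QEq P (τ ⊓ τ') u u' ↔ QEq P τ u u' ∧ QEq P τ' u u' := by
  rw [QEq, rmap_inf, inf_eq_top_iff, QEq, QEq]

lemma qEq_rmap_prodMap_iff {Z S W : C} (τ : Fib P (W ⨯ W)) (u u' : Z ⟶ S) (h : S ⟶ W) :
    QEq P (rmap P (prod.map h h) τ) u u' ↔ QEq P τ (u ≫ h) (u' ≫ h) := by
  rw [QEq, QEq, ← rmap_comp, prod.lift_map]

variable {P}

lemma IsEqRel.qEq_symm {hE : IsElementary P} {Z W : C} {τ : Fib P (W ⨯ W)}
    (hτ : IsEqRel P hE τ) {a b : Z ⟶ W} (hab : QEq P τ a b) : QEq P τ b a := by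
  rw [QEq, hτ.symm, ← rmap_comp, prod.comp_lift, prod.lift_snd, prod.lift_fst]
  exact hab

lemma IsEqRel.qEq_refl {hE : IsElementary P} (hcd : ComprehensiveDiagonals P hE)
    {Z W : C} {τ : Fib P (W ⨯ W)} (hτ : IsEqRel P hE τ) (a : Z ⟶ W) : QEq P τ a a :=
  top_le_iff.mp (((hcd a a).mp rfl).symm.trans_le (rmap_mono P _ hτ.refl))

variable (P)

theorem weak_pullback_to_pullback
    (hE : IsElementary P) (hcd : ComprehensiveDiagonals P hE)
    {X Y A S : C} (f : X ⟶ A) (g : Y ⟶ A)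
    (ρ : Fib P (X ⨯ X)) (σ : Fib P (Y ⨯ Y))
    (hρ : IsEqRel P hE ρ) (hσ : IsEqRel P hE σ)
    (k : S ⟶ X) (h : S ⟶ Y) (hcomm : k ≫ f = h ≫ g)
    (hwp : ∀ {Z : C} (a : Z ⟶ X) (b : Z ⟶ Y), a ≫ f = b ≫ g →
      ∃ u : Z ⟶ S, u ≫ k = a ∧ u ≫ h = b) :
    QHomC P (rmap P (prod.map h h) σ ⊓ rmap P (prod.map k k) ρ) ρ k ∧
    QHomC P (rmap P (prod.map h h) σ ⊓ rmap P (prod.map k k) ρ) σ h ∧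
    QEq P (hE.δ A) (k ≫ f) (h ≫ g) ∧
    ∀ {Z : C} (γ : Fib P (Z ⨯ Z)), IsEqRel P hE γ →
      ∀ (a : Z ⟶ X) (b : Z ⟶ Y), QHomC P γ ρ a → QHomC P γ σ b →
        QEq P (hE.δ A) (a ≫ f) (b ≫ g) →
        ∃ u : Z ⟶ S,
          QHomC P γ (rmap P (prod.map h h) σ ⊓ rmap P (prod.map k k) ρ) u ∧
          QEq P ρ (u ≫ k) a ∧ QEq P σ (u ≫ h) b ∧
          ∀ u' : Z ⟶ S,
            QHomC P γ (rmap P (prod.map h h) σ ⊓ rmap P (prod.map k k) ρ) u' →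
            QEq P ρ (u' ≫ k) a → QEq P σ (u' ≫ h) b →
            QEq P (rmap P (prod.map h h) σ ⊓ rmap P (prod.map k k) ρ) u u' := by
  refine ⟨inf_le_right, inf_le_left, (hcd _ _).mp hcomm, ?_⟩
  intro Z γ _ a b ha hb hab
  obtain ⟨u, rfl, rfl⟩ := hwp a b ((hcd _ _).mpr hab)
  refine ⟨u, ?_, hρ.qEq_refl hcd _, hσ.qEq_refl hcd _, fun u' _ hk hh => ?_⟩
  · rw [qHomC_inf_iff, qHomC_rmap_prodMap_iff, qHomC_rmap_prodMap_iff]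
    exact ⟨hb, ha⟩
  · rw [qEq_inf_iff, qEq_rmap_prodMap_iff, qEq_rmap_prodMap_iff]
    exact ⟨hσ.qEq_symm hh, hρ.qEq_symm hk⟩

end DoctrinePaper
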